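/- Let X be a 2-based Banach space with polar parameterization p. Then p is twice differentiable at almost every point of ℝ, and there exists a locally integrable function g : ℝ → X such that for almost every t ∈ ℝ the second derivative p''(t) exists and equals g(t). -/

import Mathlib

noncomputable section
open MeasureTheory Set Filter
open scoped ENNReal Topology

variable {X : Type*} [NormedAddCommGroup X] [NormedSpace ℝ X]

/-- `e^{it} = cos t • e₁ + sin t • e₂` for the basis `b 0, b 1`. -/
def expV (b : Module.Basis (Fin 2) ℝ X) (t : ℝ) : X :=
  Real.cos t • b 0 + Real.sin t • b 1

/-- The polar parameterization `p(t) = e^{it}/‖e^{it}‖` of the unit sphere. -/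
def polarParam (b : Module.Basis (Fin 2) ℝ X) (t : ℝ) : X :=
  ‖expV b t‖⁻¹ • expV b t

/-- The Euclidean norm `|x| = √(e₁*(x)² + e₂*(x)²)` associated to the basis. -/
def euclNorm (b : Module.Basis (Fin 2) ℝ X) (x : X) : ℝ :=
  Real.sqrt ((b.coord 0 x)^2 + (b.coord 1 x)^2)

/-- `c = min{‖x‖ : |x| = 1}`. -/
def cConst (b : Module.Basis (Fin 2) ℝ X) : ℝ :=
  sInf (norm '' {x : X | euclNorm b x = 1})

/-- `C = max{‖x‖ : |x| = 1}`. -/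
def CConst (b : Module.Basis (Fin 2) ℝ X) : ℝ :=
  sSup (norm '' {x : X | euclNorm b x = 1})

/-- The right derivative of a function `f : ℝ → X`. -/
def rightDeriv (f : ℝ → X) (t : ℝ) : X := derivWithin f (Ici t) t

/-- The left derivative of a function `f : ℝ → X`. -/
def leftDeriv (f : ℝ → X) (t : ℝ) : X := derivWithin f (Iic t) t

/-- The arc-length function `s(t) = ∫₀^t ‖p'₊(u)‖ du`. -/
def arcLen (b : Module.Basis (Fin 2) ℝ X) (t : ℝ) : ℝ :=
  ∫ u in (0:ℝ)..t, ‖rightDeriv (polarParam b) u‖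

/-- The half-length `L = s(π)` of the unit sphere. -/
def halfLen (b : Module.Basis (Fin 2) ℝ X) : ℝ := arcLen b Real.pi

/-- The inverse `t = s⁻¹` of the arc-length function. -/
def arcInv (b : Module.Basis (Fin 2) ℝ X) : ℝ → ℝ := Function.invFun (arcLen b)

/-- The natural parameterization `r = p ∘ t` of the unit sphere. -/
def natParam (b : Module.Basis (Fin 2) ℝ X) : ℝ → X := polarParam b ∘ arcInv b

/-- Local absolute continuity of `f` with a.e. derivative `f'`, in the sense that `f` is
differentiable almost everywhere, `f'` is locally integrable, and `f` is recovered from `f'`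
by integration. -/
def LocAC {E : Type*} [NormedAddCommGroup E] [NormedSpace ℝ E] [CompleteSpace E]
    (f f' : ℝ → E) : Prop :=
  (∀ᵐ t : ℝ, HasDerivAt f (f' t) t) ∧ LocallyIntegrable f' volume ∧
    ∀ a b : ℝ, a ≤ b → f b - f a = ∫ t in a..b, f' t

/-- `s` is a Lebesgue point of `g`. -/
def LebesguePoint {E : Type*} [NormedAddCommGroup E] (g : ℝ → E) (s : ℝ) : Prop :=
  Tendsto (fun ε : ℝ => (1/ε) * ∫ t in (0:ℝ)..ε, ‖g (s + t) - g s‖) (𝓝[≠] (0:ℝ)) (𝓝 0)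

/-!
Write `n t = ‖e^{it}‖`, so that `p = n⁻¹ • e^{it}`. Near any `t₀`,
`e^{it} = cos (t - t₀) • (e^{it₀} + tan (t - t₀) • e^{i(t₀ + π/2)})`, hence
`n t = cos (t - t₀) * h (tan (t - t₀))` where `h u = ‖e^{it₀} + u • e^{i(t₀ + π/2)}‖` is convex.
So `n` has a right derivative `n'₊` everywhere, and `cos (t - t₀) * n'₊ t + sin (t - t₀) * n t`
is the right derivative of `h` at `tan (t - t₀)`, a monotone function of `t`. Therefore `n'₊`, and
with it `p'₊ = n⁻¹ • e^{i(t + π/2)} - (n'₊ / n²) • e^{it}`, has bounded variation near every point.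
A function of locally bounded variation with values in a finite-dimensional space is
differentiable almost everywhere with locally integrable derivative, while `p` itself is
differentiable wherever the Lipschitz function `n` is.
-/

open scoped NNReal

section BoundedVariation

variable {α : Type*} [LinearOrder α] {E : Type*} [NormedAddCommGroup E]

theorem eVariationOn_sub_le (f g : α → E) (s : Set α) :
    eVariationOn (f - g) s ≤ eVariationOn f s + eVariationOn g s := by
  refine iSup_le fun ⟨n, u, hu, us⟩ => ?_
  calc ∑ i ∈ Finset.range n, edist ((f - g) (u (i + 1))) ((f - g) (u i))
      ≤ ∑ i ∈ Finset.range n,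
          (edist (f (u (i + 1))) (f (u i)) + edist (g (u (i + 1))) (g (u i))) :=
        Finset.sum_le_sum fun i _ => by
          simpa [sub_eq_add_neg] using edist_add_add_le (f (u (i + 1))) (-g (u (i + 1)))
            (f (u i)) (-g (u i))
    _ ≤ eVariationOn f s + eVariationOn g s := by
      rw [Finset.sum_add_distrib]
      exact add_le_add (eVariationOn.sum_le hu us) (eVariationOn.sum_le hu us)

theorem BoundedVariationOn.congr {F : Type*} [PseudoEMetricSpace F] {f g : α → F} {s : Set α}
    (hf : BoundedVariationOn f s) (h : EqOn f g s) : BoundedVariationOn g s :=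
  ne_of_eq_of_ne (eVariationOn.eq_of_eqOn h.symm) hf

theorem BoundedVariationOn.sub {f g : α → E} {s : Set α} (hf : BoundedVariationOn f s)
    (hg : BoundedVariationOn g s) : BoundedVariationOn (f - g) s :=
  ne_top_of_le_ne_top (ENNReal.add_ne_top.2 ⟨hf, hg⟩) (eVariationOn_sub_le f g s)

theorem lipschitzOnWith_inv_Ici {m : ℝ} (hm : 0 < m) :
    LipschitzOnWith (m ^ 2)⁻¹.toNNReal (fun x : ℝ => x⁻¹) (Ici m) := by
  refine LipschitzOnWith.of_dist_le_mul fun x hx y hy => ?_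
  have hx' : 0 < x := hm.trans_le hx
  have hy' : 0 < y := hm.trans_le hy
  have hxy : m ^ 2 ≤ x * y := by nlinarith [mem_Ici.1 hx, mem_Ici.1 hy]
  rw [Real.dist_eq, Real.dist_eq, inv_sub_inv hx'.ne' hy'.ne', abs_div, abs_sub_comm,
    abs_of_pos (mul_pos hx' hy'), Real.coe_toNNReal _ (by positivity),
    div_le_iff₀ (mul_pos hx' hy')]
  calc |x - y| = (m ^ 2)⁻¹ * |x - y| * m ^ 2 := by field_simp
    _ ≤ (m ^ 2)⁻¹ * |x - y| * (x * y) := by gcongr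

theorem BoundedVariationOn.inv {f : α → ℝ} {s : Set α} {m : ℝ} (hf : BoundedVariationOn f s)
    (hm : 0 < m) (hfm : ∀ x ∈ s, m ≤ f x) : BoundedVariationOn (fun x => (f x)⁻¹) s :=
  (lipschitzOnWith_inv_Ici hm).comp_boundedVariationOn hfm hf

theorem LipschitzWith.boundedVariationOn_Icc {f : ℝ → E} {C : ℝ≥0} (hf : LipschitzWith C f)
    (a b : ℝ) : BoundedVariationOn f (Icc a b) := by
  simpa using hf.locallyBoundedVariationOn univ a b (mem_univ a) (mem_univ b)

theorem MonotoneOn.boundedVariationOn_Icc {f : α → ℝ} {a b : α} (hf : MonotoneOn f (Icc a b))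
    (hab : a ≤ b) : BoundedVariationOn f (Icc a b) := by
  simpa using hf.locallyBoundedVariationOn a b (left_mem_Icc.2 hab) (right_mem_Icc.2 hab)

end BoundedVariation

theorem ae_of_forall_exists_nhds {α : Type*} [TopologicalSpace α] [SecondCountableTopology α]
    [MeasurableSpace α] {μ : Measure α} {p : α → Prop}
    (h : ∀ x, ∃ s ∈ 𝓝 x, ∀ᵐ t ∂μ, t ∈ s → p t) : ∀ᵐ t ∂μ, p t := by
  refine measure_null_of_locally_null _ fun x _ => ?_
  obtain ⟨s, hs, hp⟩ := h x
  refine ⟨{t | ¬p t} ∩ s, inter_mem_nhdsWithin _ hs, measure_mono_null ?_ hp⟩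
  rintro t ⟨hnp, hts⟩ hpt
  exact hnp (hpt hts)

section LocallyBoundedVariation

variable {E : Type*} [NormedAddCommGroup E] [NormedSpace ℝ E] [FiniteDimensional ℝ E]
  {f : ℝ → E}

theorem BoundedVariationOn.integrableOn_deriv {a b : ℝ} (hf : BoundedVariationOn f (Icc a b)) :
    IntegrableOn (deriv f) (Icc a b) := by
  rcases lt_or_ge b a with hba | hab
  · simp [Icc_eq_empty_of_lt hba]
  rw [← uIcc_of_le hab] at hf ⊢
  let v := Module.finBasis ℝ E
  let c i : E →L[ℝ] ℝ := LinearMap.toContinuousLinearMap (v.coord i)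
  have hc i : IntegrableOn (deriv fun t => c i (f t)) (uIcc a b) := by
    rw [uIcc_of_le hab, ← intervalIntegrable_iff_integrableOn_Icc_of_le hab]
    exact ((c i).lipschitz.comp_boundedVariationOn hf).intervalIntegrable_deriv
  refine (integrable_finsetSum Finset.univ fun i _ => (hc i).smul_const (v i)).congr ?_
  rw [EventuallyEq, ae_restrict_iff' measurableSet_uIcc]
  filter_upwards [hf.ae_differentiableAt_of_mem_uIcc] with t hd ht
  have hci i : deriv (fun t => c i (f t)) t = v.repr (deriv f t) i :=
    ((c i).hasFDerivAt.comp_hasDerivAt t (hd ht).hasDerivAt).deriv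
  simp only [hci, v.sum_repr]

theorem ae_differentiableAt_of_forall_boundedVariationOn_nhds
    (hf : ∀ x, ∃ s ∈ 𝓝 x, BoundedVariationOn f s) : ∀ᵐ t, DifferentiableAt ℝ f t := by
  refine ae_of_forall_exists_nhds fun x => ?_
  obtain ⟨s, hs, hbv⟩ := hf x
  obtain ⟨a, b, hx, hab, habs⟩ := exists_Icc_mem_subset_of_mem_nhds hs
  have hbv' := hbv.mono habs
  rw [← uIcc_of_le (hx.1.trans hx.2)] at hab hbv'
  exact ⟨_, hab, hbv'.ae_differentiableAt_of_mem_uIcc⟩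

theorem locallyIntegrable_deriv_of_forall_boundedVariationOn_nhds
    (hf : ∀ x, ∃ s ∈ 𝓝 x, BoundedVariationOn f s) : LocallyIntegrable (deriv f) volume := by
  intro x
  obtain ⟨s, hs, hbv⟩ := hf x
  obtain ⟨a, b, -, hab, habs⟩ := exists_Icc_mem_subset_of_mem_nhds hs
  exact ⟨Icc a b, hab, (hbv.mono habs).integrableOn_deriv⟩

end LocallyBoundedVariation

section ConvexRightDeriv

variable {φ : ℝ → ℝ}

theorem ConvexOn.hasDerivWithinAt_rightDeriv (hφ : ConvexOn ℝ univ φ) (x : ℝ) :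
    HasDerivWithinAt φ (rightDeriv φ x) (Ici x) x := by
  rw [rightDeriv, ← derivWithin_Ioi_eq_Ici]
  exact (hφ.hasDerivWithinAt_rightDeriv_of_mem_interior (by simp)).Ici_of_Ioi

theorem ConvexOn.monotone_rightDeriv (hφ : ConvexOn ℝ univ φ) : Monotone (rightDeriv φ) := by
  intro x y hxy
  simpa [rightDeriv, ← derivWithin_Ioi_eq_Ici] using
    hφ.monotoneOn_rightDeriv (by simp) (by simp) hxy

end ConvexRightDeriv

theorem DifferentiableAt.hasDerivAt_rightDeriv {f : ℝ → X} {t : ℝ} (hf : DifferentiableAt ℝ f t) :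
    HasDerivAt f (rightDeriv f t) t := by
  rw [rightDeriv, hf.derivWithin (uniqueDiffWithinAt_Ici t)]
  exact hf.hasDerivAt

open Real

section PolarParam

variable (b : Module.Basis (Fin 2) ℝ X)

theorem expV_add_pi_div_two (t : ℝ) :
    expV b (t + π / 2) = (-sin t) • b 0 + cos t • b 1 := by
  simp [expV, cos_add_pi_div_two, sin_add_pi_div_two]

theorem hasDerivAt_expV (t : ℝ) : HasDerivAt (expV b) (expV b (t + π / 2)) t := by
  rw [expV_add_pi_div_two]
  exact ((hasDerivAt_cos t).smul_const (b 0)).add ((hasDerivAt_sin t).smul_const (b 1))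

theorem expV_add (t s : ℝ) :
    expV b (t + s) = cos s • expV b t + sin s • expV b (t + π / 2) := by
  rw [expV_add_pi_div_two]
  simp only [expV, cos_add, sin_add, smul_add, smul_smul]
  module

theorem expV_ne_zero (t : ℝ) : expV b t ≠ 0 := by
  intro h
  have h0 : cos t = 0 := by simpa [expV] using congrArg (b.coord 0) h
  have h1 : sin t = 0 := by simpa [expV] using congrArg (b.coord 1) h
  simpa [h0, h1] using sin_sq_add_cos_sq t

theorem norm_expV_le (t : ℝ) : ‖expV b t‖ ≤ ‖b 0‖ + ‖b 1‖ := by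
  refine (norm_add_le _ _).trans (add_le_add ?_ ?_) <;> rw [norm_smul] <;>
    exact mul_le_of_le_one_left (norm_nonneg _) (by simp [abs_cos_le_one, abs_sin_le_one])

theorem lipschitzWith_expV : LipschitzWith (‖b 0‖₊ + ‖b 1‖₊) (expV b) :=
  lipschitzWith_of_nnnorm_deriv_le (fun t => (hasDerivAt_expV b t).differentiableAt) fun t => by
    rw [(hasDerivAt_expV b t).deriv, ← NNReal.coe_le_coe]
    exact norm_expV_le b _

def normExpV (t : ℝ) : ℝ := ‖expV b t‖

theorem normExpV_pos (t : ℝ) : 0 < normExpV b t := norm_pos_iff.2 (expV_ne_zero b t)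

theorem lipschitzWith_normExpV : LipschitzWith (‖b 0‖₊ + ‖b 1‖₊) (normExpV b) := by
  have h := lipschitzWith_one_norm.comp (lipschitzWith_expV b)
  rwa [one_mul] at h

def tangentNorm (t₀ u : ℝ) : ℝ := ‖expV b t₀ + u • expV b (t₀ + π / 2)‖

theorem convexOn_tangentNorm (t₀ : ℝ) : ConvexOn ℝ univ (tangentNorm b t₀) := by
  have h : tangentNorm b t₀ = norm ∘
      AffineMap.lineMap (expV b t₀) (expV b t₀ + expV b (t₀ + π / 2)) := by
    ext u
    simp only [tangentNorm, Function.comp_apply, AffineMap.lineMap_apply_module]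
    congr 1
    module
  simpa [h] using convexOn_univ_norm.comp_affineMap
    (AffineMap.lineMap (expV b t₀) (expV b t₀ + expV b (t₀ + π / 2)) : ℝ →ᵃ[ℝ] X)

theorem normExpV_eq_cos_mul_tangentNorm {t₀ t : ℝ} (ht : t ∈ Ioo (t₀ - π / 2) (t₀ + π / 2)) :
    normExpV b t = cos (t - t₀) * tangentNorm b t₀ (tan (t - t₀)) := by
  have hcos : 0 < cos (t - t₀) := cos_pos_of_mem_Ioo ⟨by linarith [ht.1], by linarith [ht.2]⟩
  have he : expV b t = cos (t - t₀) • (expV b t₀ + tan (t - t₀) • expV b (t₀ + π / 2)) := by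
    rw [← add_sub_cancel t₀ t, expV_add, add_sub_cancel, smul_add, smul_smul, tan_eq_sin_div_cos,
      mul_div_cancel₀ _ hcos.ne']
  rw [normExpV, he, norm_smul, norm_of_nonneg hcos.le, tangentNorm]

theorem hasDerivWithinAt_normExpV_of_mem_Ioo {t₀ t : ℝ} (ht : t ∈ Ioo (t₀ - π / 2) (t₀ + π / 2)) :
    HasDerivWithinAt (normExpV b)
      ((rightDeriv (tangentNorm b t₀) (tan (t - t₀)) - sin (t - t₀) * normExpV b t) / cos (t - t₀))
      (Ici t) t := by
  set I := Ioo (t₀ - π / 2) (t₀ + π / 2)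
  have hI : ∀ s ∈ I, s - t₀ ∈ Ioo (-(π / 2)) (π / 2) := fun s hs =>
    ⟨by linarith [hs.1], by linarith [hs.2]⟩
  have hcos : 0 < cos (t - t₀) := cos_pos_of_mem_Ioo (hI t ht)
  have hτ : HasDerivAt (fun s => tan (s - t₀)) (1 / cos (t - t₀) ^ 2) t := by
    simpa [Function.comp_def] using
      (hasDerivAt_tan hcos.ne').comp t ((hasDerivAt_id t).sub_const t₀)
  have hmaps : MapsTo (fun s => tan (s - t₀)) (Ici t ∩ I) (Ici (tan (t - t₀))) :=
    fun s hs => strictMonoOn_tan.monotoneOn (hI t ht) (hI s hs.2) (by linarith [mem_Ici.1 hs.1])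
  have hcomp := ((convexOn_tangentNorm b t₀).hasDerivWithinAt_rightDeriv _).comp t
    hτ.hasDerivWithinAt hmaps
  have hcos' : HasDerivWithinAt (fun s => cos (s - t₀)) (-sin (t - t₀)) (Ici t ∩ I) t := by
    simpa [Function.comp_def] using
      ((hasDerivAt_cos (t - t₀)).comp t ((hasDerivAt_id t).sub_const t₀)).hasDerivWithinAt
  have hn := (hcos'.mul hcomp).congr (fun s hs => normExpV_eq_cos_mul_tangentNorm b hs.2)
    (normExpV_eq_cos_mul_tangentNorm b ht)
  refine ((hasDerivWithinAt_inter (Ioo_mem_nhds ht.1 ht.2)).1 hn).congr_deriv ?_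
  rw [normExpV_eq_cos_mul_tangentNorm b ht, Function.comp_apply]
  field_simp
  ring

theorem hasDerivWithinAt_normExpV (t : ℝ) :
    HasDerivWithinAt (normExpV b) (rightDeriv (normExpV b) t) (Ici t) t :=
  (hasDerivWithinAt_normExpV_of_mem_Ioo b (t₀ := t)
    ⟨by linarith [pi_pos], by linarith [pi_pos]⟩).differentiableWithinAt.hasDerivWithinAt

theorem rightDeriv_normExpV_eq {t₀ t : ℝ} (ht : t ∈ Ioo (t₀ - π / 2) (t₀ + π / 2)) :
    rightDeriv (normExpV b) t =
      (rightDeriv (tangentNorm b t₀) (tan (t - t₀)) - sin (t - t₀) * normExpV b t) / cos (t - t₀) :=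
  (hasDerivWithinAt_normExpV_of_mem_Ioo b ht).derivWithin (uniqueDiffWithinAt_Ici t)

theorem boundedVariationOn_rightDeriv_normExpV (t₀ : ℝ) :
    BoundedVariationOn (rightDeriv (normExpV b)) (Icc (t₀ - 1) (t₀ + 1)) := by
  set J := Icc (t₀ - 1) (t₀ + 1)
  have hJ : ∀ t ∈ J, t - t₀ ∈ Icc (-1) 1 := fun t ht =>
    ⟨by linarith [ht.1], by linarith [ht.2]⟩
  have hJ' : ∀ t ∈ J, t - t₀ ∈ Ioo (-(π / 2)) (π / 2) := fun t ht =>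
    ⟨by linarith [(hJ t ht).1, pi_gt_three], by linarith [(hJ t ht).2, pi_gt_three]⟩
  have hmono : MonotoneOn (fun t => rightDeriv (tangentNorm b t₀) (tan (t - t₀))) J :=
    fun s hs t ht hst => (convexOn_tangentNorm b t₀).monotone_rightDeriv
      (strictMonoOn_tan.monotoneOn (hJ' s hs) (hJ' t ht) (by linarith))
  have hcos : ∀ t ∈ J, cos 1 ≤ cos (t - t₀) := fun t ht => by
    rw [← cos_abs (t - t₀)]
    exact cos_le_cos_of_nonneg_of_le_pi (abs_nonneg _) (by linarith [pi_gt_three])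
      (abs_le.2 (hJ t ht))
  have hsin : LipschitzWith 1 fun t => sin (t - t₀) := by
    simpa [Function.comp_def, sub_eq_add_neg] using
      lipschitzWith_sin.comp (isometry_add_right (-t₀)).lipschitz
  have hcos' : LipschitzWith 1 fun t => cos (t - t₀) := by
    simpa [Function.comp_def, sub_eq_add_neg] using
      lipschitzWith_cos.comp (isometry_add_right (-t₀)).lipschitz
  have hcos_one : 0 < cos 1 :=
    cos_pos_of_mem_Ioo ⟨by linarith [pi_gt_three], by linarith [pi_gt_three]⟩
  have hbv := ((hmono.boundedVariationOn_Icc (by linarith)).sub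
    ((hsin.boundedVariationOn_Icc _ _).mul
      ((lipschitzWith_normExpV b).boundedVariationOn_Icc _ _))).mul
    ((hcos'.boundedVariationOn_Icc _ _).inv hcos_one hcos)
  refine hbv.congr fun t ht => ?_
  have ht' : t ∈ Ioo (t₀ - π / 2) (t₀ + π / 2) :=
    ⟨by linarith [(hJ' t ht).1], by linarith [(hJ' t ht).2]⟩
  rw [rightDeriv_normExpV_eq b ht', div_eq_mul_inv]
  rfl

theorem hasDerivWithinAt_polarParam (t : ℝ) :
    HasDerivWithinAt (polarParam b) ((normExpV b t)⁻¹ • expV b (t + π / 2) -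
      (rightDeriv (normExpV b) t / normExpV b t ^ 2) • expV b t) (Ici t) t := by
  have h := ((hasDerivWithinAt_normExpV b t).inv (normExpV_pos b t).ne').smul
    (hasDerivAt_expV b t).hasDerivWithinAt
  rw [neg_div, neg_smul, ← sub_eq_add_neg] at h
  exact h

theorem rightDeriv_polarParam : rightDeriv (polarParam b) = fun t =>
    (normExpV b t)⁻¹ • expV b (t + π / 2) -
      (rightDeriv (normExpV b) t / normExpV b t ^ 2) • expV b t :=
  funext fun t => (hasDerivWithinAt_polarParam b t).derivWithin (uniqueDiffWithinAt_Ici t)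

theorem boundedVariationOn_rightDeriv_polarParam (t₀ : ℝ) :
    BoundedVariationOn (rightDeriv (polarParam b)) (Icc (t₀ - 1) (t₀ + 1)) := by
  obtain ⟨z, -, hz⟩ := isCompact_Icc.exists_isMinOn
    (nonempty_Icc.2 (by linarith : t₀ - 1 ≤ t₀ + 1))
    (lipschitzWith_normExpV b).continuous.continuousOn
  have hinv := ((lipschitzWith_normExpV b).boundedVariationOn_Icc (t₀ - 1) (t₀ + 1)).inv
    (normExpV_pos b z) hz
  have hshift : LipschitzWith (‖b 0‖₊ + ‖b 1‖₊) fun t => expV b (t + π / 2) := by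
    simpa [Function.comp_def] using
      (lipschitzWith_expV b).comp (isometry_add_right (π / 2)).lipschitz
  rw [rightDeriv_polarParam]
  refine (hinv.fun_smul (hshift.boundedVariationOn_Icc _ _)).sub
    ((((boundedVariationOn_rightDeriv_normExpV b t₀).mul (hinv.mul hinv)).fun_smul
      ((lipschitzWith_expV b).boundedVariationOn_Icc _ _)).congr fun t _ => ?_)
  simp only [Pi.mul_apply]
  rw [div_eq_mul_inv, ← inv_pow, sq]

theorem ae_differentiableAt_polarParam : ∀ᵐ t, DifferentiableAt ℝ (polarParam b) t := by
  filter_upwards [(lipschitzWith_normExpV b).ae_differentiableAt_real] with t ht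
  exact (ht.inv (normExpV_pos b t).ne').smul (hasDerivAt_expV b t).differentiableAt

end PolarParam

theorem polarParam_ae_twice_differentiable_general (b : Module.Basis (Fin 2) ℝ X) :
    ∃ g : ℝ → X, LocallyIntegrable g volume ∧
      ∀ᵐ t : ℝ, HasDerivAt (polarParam b) (rightDeriv (polarParam b) t) t ∧
        HasDerivAt (rightDeriv (polarParam b)) (g t) t := by
  have : FiniteDimensional ℝ X := b.finiteDimensional_of_finite
  have hbv : ∀ x, ∃ s ∈ 𝓝 x, BoundedVariationOn (rightDeriv (polarParam b)) s := fun x =>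
    ⟨_, Icc_mem_nhds (by linarith) (by linarith), boundedVariationOn_rightDeriv_polarParam b x⟩
  refine ⟨_, locallyIntegrable_deriv_of_forall_boundedVariationOn_nhds hbv, ?_⟩
  filter_upwards [ae_differentiableAt_polarParam b,
    ae_differentiableAt_of_forall_boundedVariationOn_nhds hbv] with t hp hP
  exact ⟨hp.hasDerivAt_rightDeriv, hP.hasDerivAt⟩

/-- The polar parameterization is twice differentiable almost everywhere, with a locally
integrable second derivative. -/
theorem polarParam_ae_twice_differentiable [CompleteSpace X] (b : Module.Basis (Fin 2) ℝ X) :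
    ∃ g : ℝ → X, LocallyIntegrable g volume ∧
      ∀ᵐ t : ℝ, HasDerivAt (polarParam b) (rightDeriv (polarParam b) t) t ∧
        HasDerivAt (rightDeriv (polarParam b)) (g t) t :=
  polarParam_ae_twice_differentiable_general b
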